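/- The enhanced power graph of the alternating group A₉ contains an induced 7-cycle on the permutations (1 2 3 4 5), (7 8 9), (1 2)(3 4), (5 6 7), (1 2)(8 9), (3 4 5), (6 7)(8 9), and hence is not a perfect graph. -/

import Mathlib

def powerGraph (G : Type*) [Group G] : SimpleGraph G where
  Adj x y := x ≠ y ∧ ((∃ n : ℤ, n ≠ 0 ∧ y = x ^ n) ∨ ∃ n : ℤ, n ≠ 0 ∧ x = y ^ n)
  symm := ⟨fun _ _ ⟨h, h2⟩ => ⟨h.symm, h2.symm⟩⟩
  loopless := ⟨fun _ ⟨h, _⟩ => h rfl⟩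

def enhancedPowerGraph (G : Type*) [Group G] : SimpleGraph G where
  Adj x y := x ≠ y ∧ ∃ z : G, x ∈ Subgroup.zpowers z ∧ y ∈ Subgroup.zpowers z
  symm := ⟨fun _ _ ⟨h, z, hx, hy⟩ => ⟨h.symm, z, hy, hx⟩⟩
  loopless := ⟨fun _ ⟨h, _⟩ => h rfl⟩


def SimpleGraph.IsPerfect {V : Type*} (G : SimpleGraph V) : Prop :=
  ∀ s : Set V, (G.induce s).chromaticNumber = ((G.induce s).cliqueNum : ℕ∞)

/-!
Consecutive vertices of the heptagon are disjoint permutations of coprime orders, so their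
product generates both of them. A non-adjacent pair either does not commute, or consists of two
elements of the same prime order generating different subgroups; neither can lie in one cyclic
group, which has a unique subgroup of each order. Finally, an induced odd cycle of length at
least five has clique number two but chromatic number three.
-/

namespace SimpleGraph

variable {V : Type*} {G : SimpleGraph V}

theorem CliqueFree.cliqueNum_lt {n : ℕ} (h : G.CliqueFree n) : G.cliqueNum < n := by
  obtain ⟨s, hs⟩ := G.exists_isNClique_cliqueNum
  by_contra! hle
  exact h.mono hle s hs

theorem val_cases_of_cycleGraph_adj {n : ℕ} {u v : Fin n} (h : (cycleGraph n).Adj u v) :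
    u.val = v.val + 1 ∨ v.val = u.val + 1 ∨ (u.val + 1 = n ∧ v.val = 0) ∨
      (v.val + 1 = n ∧ u.val = 0) := by
  have hsub (a b : Fin n) (hab : (a - b).val = 1) :
      a.val = b.val + 1 ∨ (a.val = 0 ∧ b.val + 1 = n) := by
    rcases le_or_gt b a with hba | hab'
    · rw [Fin.coe_sub_iff_le.mpr hba] at hab
      omega
    · rw [Fin.coe_sub_iff_lt.mpr hab'] at hab
      omega
  rcases cycleGraph_adj'.mp h with h | h <;> rcases hsub _ _ h with h | h <;> omega

theorem cycleGraph_cliqueFree_three {n : ℕ} (hn : 4 ≤ n) : (cycleGraph n).CliqueFree 3 := by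
  intro s hs
  obtain ⟨a, b, c, hab, hac, hbc, -⟩ := is3Clique_iff.mp hs
  have := val_cases_of_cycleGraph_adj hab
  have := val_cases_of_cycleGraph_adj hac
  have := val_cases_of_cycleGraph_adj hbc
  have := c.isLt
  omega

theorem not_isPerfect_of_cycleGraph_isIndContained {n : ℕ} (hn : 5 ≤ n) (hodd : Odd n)
    (h : cycleGraph n ⊴ G) : ¬G.IsPerfect := by
  intro hG
  obtain ⟨s, ⟨e⟩⟩ := isIndContained_iff_exists_iso_induce.mp h
  have hfree : (G.induce s).CliqueFree 3 :=
    (cycleGraph_cliqueFree_three (by omega)).comap e.symm.isContained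
  have hle : (G.induce s).chromaticNumber ≤ 2 := by
    rw [hG s]
    exact_mod_cast Nat.le_of_lt_succ hfree.cliqueNum_lt
  rw [← chromaticNumber_congr e, chromaticNumber_cycleGraph_of_odd n (by omega) hodd] at hle
  exact absurd hle (by decide)

theorem adj_iff_cycleGraph_adj {n : ℕ} {v : Fin (n + 2) → V}
    (hadj : ∀ i, G.Adj (v i) (v (i + 1)))
    (hnadj : ∀ i j, ¬(cycleGraph (n + 2)).Adj i j → ¬G.Adj (v i) (v j)) (i j : Fin (n + 2)) :
    G.Adj (v i) (v j) ↔ (cycleGraph (n + 2)).Adj i j := by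
  refine ⟨not_imp_not.mp (hnadj i j), fun h => ?_⟩
  rcases cycleGraph_adj.mp h with h | h
  · rw [eq_add_of_sub_eq' h]
    exact (hadj j).symm
  · rw [eq_add_of_sub_eq' h]
    exact hadj i

def Embedding.ofCycleGraph {n : ℕ} (v : Fin (n + 2) → V) (hv : Function.Injective v)
    (hadj : ∀ i, G.Adj (v i) (v (i + 1)))
    (hnadj : ∀ i j, ¬(cycleGraph (n + 2)).Adj i j → ¬G.Adj (v i) (v j)) :
    cycleGraph (n + 2) ↪g G :=
  ⟨⟨v, hv⟩, adj_iff_cycleGraph_adj hadj hnadj _ _⟩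

end SimpleGraph

section EnhancedPowerGraph

variable {G : Type*} [Group G] {x y : G}

theorem IsCyclic.mem_zpowers_of_orderOf_eq [Finite G] [IsCyclic G] (h : orderOf x = orderOf y) :
    x ∈ Subgroup.zpowers y := by
  classical
  have := Fintype.ofFinite G
  -- `zpowers y` has `orderOf y` elements, all in the `orderOf y`-torsion, which is no larger.
  let torsion : Finset G := {a | a ^ orderOf y = 1}
  have hsub : (Subgroup.zpowers y : Set G).toFinset ⊆ torsion := by
    rintro _ hk
    obtain ⟨k, rfl⟩ := Subgroup.mem_zpowers_iff.mp (Set.mem_toFinset.mp hk)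
    simp only [torsion, Finset.mem_filter, Finset.mem_univ, true_and]
    rw [← zpow_natCast, ← zpow_mul, mul_comm, zpow_mul, zpow_natCast, pow_orderOf_eq_one, one_zpow]
  have hcard : torsion.card ≤ (Subgroup.zpowers y : Set G).toFinset.card := by
    rw [Set.toFinset_card, ← Nat.card_eq_fintype_card, Nat.card_coe_set_eq]
    exact (IsCyclic.card_pow_eq_one_le (orderOf_pos y)).trans_eq (Nat.card_zpowers y).symm
  have hx : x ∈ torsion := by simp [torsion, ← h, pow_orderOf_eq_one]
  rw [← Finset.eq_of_subset_of_card_le hsub hcard] at hx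
  exact Set.mem_toFinset.mp hx

theorem commute_of_enhancedPowerGraph_adj (h : (enhancedPowerGraph G).Adj x y) : Commute x y := by
  obtain ⟨-, z, hx, hy⟩ := h
  obtain ⟨a, rfl⟩ := Subgroup.mem_zpowers_iff.mp hx
  obtain ⟨b, rfl⟩ := Subgroup.mem_zpowers_iff.mp hy
  exact Commute.zpow_zpow_self z a b

theorem mem_zpowers_of_enhancedPowerGraph_adj [Finite G] (h : (enhancedPowerGraph G).Adj x y)
    (hxy : orderOf x = orderOf y) : x ∈ Subgroup.zpowers y := by
  obtain ⟨-, z, hx, hy⟩ := h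
  have hmem : (⟨x, hx⟩ : Subgroup.zpowers z) ∈ Subgroup.zpowers ⟨y, hy⟩ :=
    IsCyclic.mem_zpowers_of_orderOf_eq (by simpa using hxy)
  obtain ⟨k, hk⟩ := Subgroup.mem_zpowers_iff.mp hmem
  exact Subgroup.mem_zpowers_iff.mpr ⟨k, congrArg Subtype.val hk⟩

theorem not_enhancedPowerGraph_adj_of_pow_prime [Finite G] {p : ℕ} [Fact p.Prime]
    (hx : x ^ p = 1) (hy : y ^ p = 1) (hy1 : y ≠ 1) (hxy : ∀ k < p, y ^ k ≠ x) :
    ¬(enhancedPowerGraph G).Adj x y := by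
  classical
  intro h
  have hx1 : x ≠ 1 := fun hx1 => hxy 0 (Fact.out : p.Prime).pos (by rw [pow_zero, hx1])
  have hord : orderOf x = orderOf y := by rw [orderOf_eq_prime hx hx1, orderOf_eq_prime hy hy1]
  have hmem := mem_zpowers_iff_mem_range_orderOf.mp (mem_zpowers_of_enhancedPowerGraph_adj h hord)
  rw [orderOf_eq_prime hy hy1] at hmem
  obtain ⟨k, hk, hkx⟩ := Finset.mem_image.mp hmem
  exact hxy k (Finset.mem_range.mp hk) hkx

theorem mem_zpowers_mul_of_coprime {n : ℕ} (hc : Commute x y) (hy : y ^ n = 1)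
    (hn : n.Coprime (orderOf x)) : x ∈ Subgroup.zpowers (x * y) := by
  obtain ⟨k, hk⟩ := exists_pow_eq_self_of_coprime hn
  have hpow : (x * y) ^ n = x ^ n := by rw [hc.mul_pow, hy, mul_one]
  convert pow_mem (pow_mem (Subgroup.mem_zpowers (x * y)) n) k
  rw [hpow, hk]

theorem enhancedPowerGraph_adj_of_coprime {m n : ℕ} (hne : x ≠ y) (hc : Commute x y)
    (hx : x ^ m = 1) (hy : y ^ n = 1) (hmn : m.Coprime n) : (enhancedPowerGraph G).Adj x y := by
  have hxy := mem_zpowers_mul_of_coprime hc hy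
    (hmn.symm.coprime_dvd_right (orderOf_dvd_of_pow_eq_one hx))
  have hyx := mem_zpowers_mul_of_coprime hc.symm hx
    (hmn.coprime_dvd_right (orderOf_dvd_of_pow_eq_one hy))
  exact ⟨hne, x * y, hxy, hc.eq ▸ hyx⟩

end EnhancedPowerGraph

instance Commute.decidable {M : Type*} [Mul M] [DecidableEq M] :
    DecidableRel (Commute : M → M → Prop) :=
  fun a b => decEq (a * b) (b * a)

section Heptagon

open Equiv

def heptagonPerm : Fin 7 → Perm (Fin 9) :=
  ![c[0, 1, 2, 3, 4], c[6, 7, 8], c[0, 1] * c[2, 3], c[4, 5, 6], c[0, 1] * c[7, 8], c[2, 3, 4],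
    c[5, 6] * c[7, 8]]

def heptagon (i : Fin 7) : alternatingGroup (Fin 9) :=
  ⟨heptagonPerm i, Perm.mem_alternatingGroup.mpr (by revert i; decide)⟩

theorem heptagon_injective : Function.Injective heptagon := by decide

theorem heptagon_adj_succ (i : Fin 7) :
    (enhancedPowerGraph (alternatingGroup (Fin 9))).Adj (heptagon i) (heptagon (i + 1)) := by
  fin_cases i
  · exact enhancedPowerGraph_adj_of_coprime (m := 5) (n := 3) (by decide) (by decide) (by decide)
      (by decide) (by norm_num)
  · exact enhancedPowerGraph_adj_of_coprime (m := 3) (n := 2) (by decide) (by decide) (by decide)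
      (by decide) (by norm_num)
  · exact enhancedPowerGraph_adj_of_coprime (m := 2) (n := 3) (by decide) (by decide) (by decide)
      (by decide) (by norm_num)
  · exact enhancedPowerGraph_adj_of_coprime (m := 3) (n := 2) (by decide) (by decide) (by decide)
      (by decide) (by norm_num)
  · exact enhancedPowerGraph_adj_of_coprime (m := 2) (n := 3) (by decide) (by decide) (by decide)
      (by decide) (by norm_num)
  · exact enhancedPowerGraph_adj_of_coprime (m := 3) (n := 2) (by decide) (by decide) (by decide)
      (by decide) (by norm_num)
  · exact enhancedPowerGraph_adj_of_coprime (m := 2) (n := 5) (by decide) (by decide) (by decide)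
      (by decide) (by norm_num)

theorem heptagon_not_adj (i j : Fin 7) (h : ¬(SimpleGraph.cycleGraph 7).Adj i j) :
    ¬(enhancedPowerGraph (alternatingGroup (Fin 9))).Adj (heptagon i) (heptagon j) := by
  fin_cases i <;> fin_cases j
  all_goals first
    | exact fun _ => h (by decide)
    | exact SimpleGraph.irrefl _
    | exact fun hadj => absurd (commute_of_enhancedPowerGraph_adj hadj) (by decide)
    | exact not_enhancedPowerGraph_adj_of_pow_prime (p := 2) (by decide) (by decide) (by decide)
        (by decide)
    | exact not_enhancedPowerGraph_adj_of_pow_prime (p := 3) (by decide) (by decide) (by decide)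
        (by decide)

def heptagonEmbedding :
    SimpleGraph.cycleGraph 7 ↪g enhancedPowerGraph (alternatingGroup (Fin 9)) :=
  .ofCycleGraph heptagon heptagon_injective heptagon_adj_succ heptagon_not_adj

end Heptagon

open Equiv in
/-- Points are `0`-indexed: `c[0, 1, 2, 3, 4]` is the cycle `(1 2 3 4 5)`. -/
theorem enhanced_A9_not_perfect :
    (let Γ := enhancedPowerGraph (alternatingGroup (Fin 9))
     ∃ v₁ v₂ v₃ v₄ v₅ v₆ v₇ : alternatingGroup (Fin 9),
       (v₁ : Equiv.Perm (Fin 9)) = c[0, 1, 2, 3, 4] ∧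
       (v₂ : Equiv.Perm (Fin 9)) = c[6, 7, 8] ∧
       (v₃ : Equiv.Perm (Fin 9)) = c[0, 1] * c[2, 3] ∧
       (v₄ : Equiv.Perm (Fin 9)) = c[4, 5, 6] ∧
       (v₅ : Equiv.Perm (Fin 9)) = c[0, 1] * c[7, 8] ∧
       (v₆ : Equiv.Perm (Fin 9)) = c[2, 3, 4] ∧
       (v₇ : Equiv.Perm (Fin 9)) = c[5, 6] * c[7, 8] ∧
       Γ.Adj v₁ v₂ ∧ Γ.Adj v₂ v₃ ∧ Γ.Adj v₃ v₄ ∧ Γ.Adj v₄ v₅ ∧ Γ.Adj v₅ v₆ ∧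
       Γ.Adj v₆ v₇ ∧ Γ.Adj v₇ v₁ ∧
       ¬Γ.Adj v₁ v₃ ∧ ¬Γ.Adj v₁ v₄ ∧ ¬Γ.Adj v₁ v₅ ∧ ¬Γ.Adj v₁ v₆ ∧
       ¬Γ.Adj v₂ v₄ ∧ ¬Γ.Adj v₂ v₅ ∧ ¬Γ.Adj v₂ v₆ ∧ ¬Γ.Adj v₂ v₇ ∧
       ¬Γ.Adj v₃ v₅ ∧ ¬Γ.Adj v₃ v₆ ∧ ¬Γ.Adj v₃ v₇ ∧
       ¬Γ.Adj v₄ v₆ ∧ ¬Γ.Adj v₄ v₇ ∧ ¬Γ.Adj v₅ v₇) ∧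
    ¬ (enhancedPowerGraph (alternatingGroup (Fin 9))).IsPerfect := by
  refine ⟨?_, SimpleGraph.not_isPerfect_of_cycleGraph_isIndContained (by norm_num) (by decide)
    ⟨heptagonEmbedding⟩⟩
  refine ⟨heptagonEmbedding 0, heptagonEmbedding 1, heptagonEmbedding 2, heptagonEmbedding 3,
    heptagonEmbedding 4, heptagonEmbedding 5, heptagonEmbedding 6,
    rfl, rfl, rfl, rfl, rfl, rfl, rfl, ?_⟩
  simp only [heptagonEmbedding.map_adj_iff]
  decide
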